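/- arXiv:1403.4622 — 2 statements merged into one kernel-verified Lean document; each statement's English description precedes it below -/
import Mathlib

section
/- Let G be a Garside group, r a natural number, p, q ∈ ℤ^r, and a, c ∈ [p,q]. Then a and c are conjugate in G if and only if c belongs to the smallest subset W of [p,q] containing a that is closed under the following operation: whenever v ∈ W, s ∈ S, and v^s ∈ [p,q], then v^s ∈ W. (Correctness of the basic algorithm computing a^G ∩ [p,q], which solves the Simultaneous Conjugacy Problem in Garside groups.) -/
/-- A Garside structure on a group `G`: a submonoid `G⁺` of positive elements
together with a Garside element `Δ`, satisfying the Garside axioms. -/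
structure GarsideStructure (G : Type*) [Group G] where
  /-- the monoid `G⁺` of positive elements -/
  pos : Submonoid G
  /-- the Garside element `Δ` -/
  Δ : G
  delta_mem : Δ ∈ pos
  /-- `G⁺` is Noetherian -/
  noetherian : ∀ a ∈ pos, ∃ n : ℕ, ∀ l : List G,
    (∀ x ∈ l, x ∈ pos ∧ x ≠ 1) → l.prod = a → l.length ≤ n
  /-- any two elements of `G⁺` admit a least common right multiple (w.r.t. `≼`) -/
  lcm_right : ∀ a ∈ pos, ∀ b ∈ pos, ∃ m ∈ pos,
    a⁻¹ * m ∈ pos ∧ b⁻¹ * m ∈ pos ∧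
      ∀ c ∈ pos, a⁻¹ * c ∈ pos → b⁻¹ * c ∈ pos → m⁻¹ * c ∈ pos
  /-- any two elements of `G⁺` admit a least common left multiple (w.r.t. `≽`) -/
  lcm_left : ∀ a ∈ pos, ∀ b ∈ pos, ∃ m ∈ pos,
    m * a⁻¹ ∈ pos ∧ m * b⁻¹ ∈ pos ∧
      ∀ c ∈ pos, c * a⁻¹ ∈ pos → c * b⁻¹ ∈ pos → c * m⁻¹ ∈ pos
  /-- `G` is the group of fractions of `G⁺` -/
  fractions : ∀ g : G, ∃ a ∈ pos, ∃ b ∈ pos, g = a⁻¹ * b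
  /-- `Δ` is balanced: its left divisors in `G⁺` coincide with its right divisors -/
  balanced : ∀ s ∈ pos, (s⁻¹ * Δ ∈ pos ↔ Δ * s⁻¹ ∈ pos)
  /-- the set of simple elements (divisors of `Δ`) is finite -/
  simples_finite : {s : G | s ∈ pos ∧ s⁻¹ * Δ ∈ pos}.Finite
  /-- the simple elements generate `G⁺` -/
  simples_generate : Submonoid.closure {s : G | s ∈ pos ∧ s⁻¹ * Δ ∈ pos} = pos

namespace GarsideStructure

variable {G : Type*} [Group G]

/-- `a ≼ b` : left divisibility. -/
def LeftDvd (Γ : GarsideStructure G) (a b : G) : Prop := a⁻¹ * b ∈ Γ.pos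

/-- `b ≽ a` : right divisibility. -/
def RightDvd (Γ : GarsideStructure G) (b a : G) : Prop := b * a⁻¹ ∈ Γ.pos

/-- a simple element: a divisor of `Δ`. -/
def Simple (Γ : GarsideStructure G) (s : G) : Prop := s ∈ Γ.pos ∧ Γ.LeftDvd s Γ.Δ

/-- an atom of `G⁺`. -/
def Atom (Γ : GarsideStructure G) (a : G) : Prop :=
  a ∈ Γ.pos ∧ a ≠ 1 ∧ ∀ b ∈ Γ.pos, ∀ c ∈ Γ.pos, a = b * c → b = 1 ∨ c = 1

/-- the iterated automorphism `τ^k`, where `τ(x) = Δ⁻¹xΔ`; so `τ^k(x) = Δ^(-k) x Δ^k`. -/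
def tau (Γ : GarsideStructure G) (k : ℤ) (x : G) : G := Γ.Δ ^ (-k) * x * Γ.Δ ^ k

/-- `d` is the greatest common left divisor (`∧`) of `a` and `b`. -/
def IsLeftGcd (Γ : GarsideStructure G) (d a b : G) : Prop :=
  d ∈ Γ.pos ∧ Γ.LeftDvd d a ∧ Γ.LeftDvd d b ∧
    ∀ c ∈ Γ.pos, Γ.LeftDvd c a → Γ.LeftDvd c b → Γ.LeftDvd c d

/-- `d` is the greatest common right divisor (`⋀̃`) of `a` and `b`. -/
def IsRightGcd (Γ : GarsideStructure G) (d a b : G) : Prop :=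
  d ∈ Γ.pos ∧ Γ.RightDvd a d ∧ Γ.RightDvd b d ∧
    ∀ c ∈ Γ.pos, Γ.RightDvd a c → Γ.RightDvd b c → Γ.RightDvd d c

/-- membership of a tuple `a ∈ Gʳ` in the interval `[p,q]`:
`pᵢ ≤ inf aᵢ` (i.e. `Δ^pᵢ ≼ aᵢ`) and `sup aᵢ ≤ qᵢ` (i.e. `aᵢ ≼ Δ^qᵢ`) for all `i`. -/
def InInterval (Γ : GarsideStructure G) {r : ℕ} (p q : Fin r → ℤ) (a : Fin r → G) : Prop :=
  ∀ i, Γ.LeftDvd (Γ.Δ ^ (p i)) (a i) ∧ Γ.LeftDvd (a i) (Γ.Δ ^ (q i))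

/-- `‖a‖`: the maximal number of atoms in an expression of `a` as a product of atoms. -/
noncomputable def anorm (Γ : GarsideStructure G) (a : G) : ℕ :=
  sSup {n | ∃ l : List G, (∀ x ∈ l, Γ.Atom x) ∧ l.prod = a ∧ l.length = n}

end GarsideStructure

/-!
A conjugator `x` with `a^x = c` may be taken positive, since some power of `Δ` is central.
Convexity: if `v` and `v^x` lie in `[p,q]` and `s = x ∧ Δ`, then `v^s` lies in `[p,q]`, because
left multiplication by a positive element distributes over `∧`. So `x` can be peeled off one
simple factor `x ∧ Δ` at a time without leaving `[p,q]`, by induction on the maximal number of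
nontrivial positive factors of `x`, which is finite by Noetherianity. Conversely, the
conjugates of `a` in `[p,q]` form a set `W` of the required kind.
-/

namespace GarsideStructure

variable {G : Type*} [Group G] (Γ : GarsideStructure G)

@[elab_as_elim]
theorem pos_induction {P : G → Prop} (one : P 1) (simple : ∀ s, Γ.Simple s → P s)
    (mul : ∀ x ∈ Γ.pos, ∀ y ∈ Γ.pos, P x → P y → P (x * y)) {u : G} (hu : u ∈ Γ.pos) :
    P u := by
  rw [← Γ.simples_generate] at hu
  induction hu using Submonoid.closure_induction with
  | mem s hs => exact simple s hs
  | one => exact one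
  | mul x y hx hy ihx ihy =>
    rw [Γ.simples_generate] at hx hy
    exact mul x hx y hy ihx ihy

def Factorization (a : G) : Set (List G) := {l | (∀ x ∈ l, x ∈ Γ.pos ∧ x ≠ 1) ∧ l.prod = a}

/-- Attained for `a ∈ G⁺` by Noetherianity; for other `a` the supremum is a junk value. -/
noncomputable def posLength (a : G) : ℕ := sSup (List.length '' Γ.Factorization a)

variable {Γ}

theorem LeftDvd.trans {a b c : G} (hab : Γ.LeftDvd a b) (hbc : Γ.LeftDvd b c) :
    Γ.LeftDvd a c := by
  simpa [LeftDvd, mul_assoc] using mul_mem hab hbc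

theorem LeftDvd.mul_left {a b : G} (h : Γ.LeftDvd a b) (c : G) : Γ.LeftDvd (c * a) (c * b) := by
  simpa [LeftDvd, mul_assoc] using h

theorem leftDvd_mul_right (a : G) {b : G} (hb : b ∈ Γ.pos) : Γ.LeftDvd a (a * b) := by
  simpa [LeftDvd] using hb

theorem LeftDvd.mem_pos {a b : G} (h : Γ.LeftDvd a b) (ha : a ∈ Γ.pos) : b ∈ Γ.pos := by
  simpa using mul_mem ha h

theorem bddAbove_length_factorization {a : G} (ha : a ∈ Γ.pos) :
    BddAbove (List.length '' Γ.Factorization a) := by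
  obtain ⟨n, hn⟩ := Γ.noetherian a ha
  exact ⟨n, by rintro _ ⟨l, ⟨hl, hprod⟩, rfl⟩; exact hn l hl hprod⟩

theorem length_le_posLength {a : G} (ha : a ∈ Γ.pos) {l : List G} (hl : l ∈ Γ.Factorization a) :
    l.length ≤ Γ.posLength a :=
  le_csSup (bddAbove_length_factorization ha) ⟨l, hl, rfl⟩

theorem exists_factorization_length_eq {a : G} (ha : a ∈ Γ.pos) :
    ∃ l ∈ Γ.Factorization a, l.length = Γ.posLength a := by
  have hne : (List.length '' Γ.Factorization a).Nonempty := by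
    by_cases h : a = 1
    · exact ⟨_, [], by simp [Factorization, h], rfl⟩
    · exact ⟨_, [a], by simp [Factorization, ha, h], rfl⟩
  exact Nat.sSup_mem hne (bddAbove_length_factorization ha)

theorem posLength_add_le {a b : G} (ha : a ∈ Γ.pos) (hb : b ∈ Γ.pos) :
    Γ.posLength a + Γ.posLength b ≤ Γ.posLength (a * b) := by
  obtain ⟨l, ⟨hl, rfl⟩, hla⟩ := exists_factorization_length_eq ha
  obtain ⟨m, ⟨hm, rfl⟩, hmb⟩ := exists_factorization_length_eq hb
  rw [← hla, ← hmb, ← List.length_append]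
  refine length_le_posLength (mul_mem ha hb) ⟨fun x hx => ?_, List.prod_append⟩
  exact (List.mem_append.1 hx).elim (hl x) (hm x)

theorem one_le_posLength {a : G} (ha : a ∈ Γ.pos) (ha1 : a ≠ 1) : 1 ≤ Γ.posLength a :=
  length_le_posLength (l := [a]) ha ⟨by simpa using ⟨ha, ha1⟩, by simp⟩

theorem posLength_lt_mul_right {a b : G} (ha : a ∈ Γ.pos) (hb : b ∈ Γ.pos) (hb1 : b ≠ 1) :
    Γ.posLength a < Γ.posLength (a * b) := by
  have := one_le_posLength hb hb1
  have := posLength_add_le ha hb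
  omega

theorem posLength_lt_mul_left {a b : G} (ha : a ∈ Γ.pos) (hb : b ∈ Γ.pos) (ha1 : a ≠ 1) :
    Γ.posLength b < Γ.posLength (a * b) := by
  have := one_le_posLength ha ha1
  have := posLength_add_le ha hb
  omega

theorem LeftDvd.posLength_le {a b : G} (h : Γ.LeftDvd a b) (ha : a ∈ Γ.pos) :
    Γ.posLength a ≤ Γ.posLength b := by
  by_cases h1 : a⁻¹ * b = 1
  · rw [inv_mul_eq_one.1 h1]
  · simpa using (posLength_lt_mul_right ha h h1).le

theorem eq_one_of_mem_pos_of_inv_mem_pos {a : G} (ha : a ∈ Γ.pos) (ha' : a⁻¹ ∈ Γ.pos) : a = 1 := by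
  by_contra h1
  have h1' : a⁻¹ ≠ 1 := inv_ne_one.2 h1
  have := posLength_lt_mul_right ha ha' h1'
  have := posLength_lt_mul_right (one_mem _) ha h1
  simp only [mul_inv_cancel, one_mul] at *
  omega

theorem tau_zero (x : G) : Γ.tau 0 x = x := by simp [tau]

theorem tau_add (j k : ℤ) (x : G) : Γ.tau (j + k) x = Γ.tau j (Γ.tau k x) := by
  simp only [tau]; group

theorem tau_mul (k : ℤ) (x y : G) : Γ.tau k (x * y) = Γ.tau k x * Γ.tau k y := by
  simp only [tau]; group

theorem tau_inv (k : ℤ) (x : G) : Γ.tau k x⁻¹ = (Γ.tau k x)⁻¹ := by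
  simp only [tau]; group

theorem tau_delta (k : ℤ) : Γ.tau k Γ.Δ = Γ.Δ := by
  simp only [tau]; group

theorem tau_neg_tau (k : ℤ) (x : G) : Γ.tau (-k) (Γ.tau k x) = x := by
  rw [← tau_add, neg_add_cancel, tau_zero]

theorem tau_tau_neg (k : ℤ) (x : G) : Γ.tau k (Γ.tau (-k) x) = x := by
  rw [← tau_add, add_neg_cancel, tau_zero]

theorem tau_eq_self_iff {k : ℤ} {x : G} : Γ.tau k x = x ↔ Commute (Γ.Δ ^ k) x := by
  rw [tau, zpow_neg, mul_assoc, inv_mul_eq_iff_eq_mul, eq_comm]; rfl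

/-- `s⁻¹Δ` and `Δs⁻¹` are the complements of a simple `s`, and balancedness makes
them simple again; `τ(s)` and `τ⁻¹(s)` are complements of complements. -/
theorem tau_one_mem_of_simple {s : G} (hs : Γ.Simple s) : Γ.tau 1 s ∈ Γ.pos := by
  have hw : Γ.Δ * (s⁻¹ * Γ.Δ)⁻¹ ∈ Γ.pos := by simpa using hs.1
  simpa [tau, mul_assoc] using (Γ.balanced _ hs.2).2 hw

theorem tau_neg_one_mem_of_simple {s : G} (hs : Γ.Simple s) : Γ.tau (-1) s ∈ Γ.pos := by
  have ht : Γ.Δ * s⁻¹ ∈ Γ.pos := (Γ.balanced s hs.1).1 hs.2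
  have ht' : (Γ.Δ * s⁻¹)⁻¹ * Γ.Δ ∈ Γ.pos := by simpa using hs.1
  simpa [tau, mul_assoc] using (Γ.balanced _ ht).1 ht'

theorem tau_mem_of_mem_of_simple {k : ℤ} (h : ∀ s, Γ.Simple s → Γ.tau k s ∈ Γ.pos) {u : G}
    (hu : u ∈ Γ.pos) : Γ.tau k u ∈ Γ.pos := by
  refine Γ.pos_induction (by simp [tau]) h (fun x _ y _ hx hy => ?_) hu
  rw [tau_mul]; exact mul_mem hx hy

theorem tau_mem (k : ℤ) {u : G} (hu : u ∈ Γ.pos) : Γ.tau k u ∈ Γ.pos := by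
  induction k using Int.induction_on generalizing u with
  | zero => rwa [tau_zero]
  | succ k ih =>
    rw [add_comm, tau_add]
    exact tau_mem_of_mem_of_simple (fun s hs => tau_one_mem_of_simple hs) (ih hu)
  | pred k ih =>
    rw [sub_eq_neg_add, tau_add]
    exact tau_mem_of_mem_of_simple (fun s hs => tau_neg_one_mem_of_simple hs) (ih hu)

theorem LeftDvd.tau {a b : G} (h : Γ.LeftDvd a b) (k : ℤ) : Γ.LeftDvd (Γ.tau k a) (Γ.tau k b) := by
  have := tau_mem k h
  rwa [tau_mul, tau_inv] at this

theorem tau_leftDvd_delta {s : G} (h : Γ.LeftDvd s Γ.Δ) (k : ℤ) : Γ.LeftDvd (Γ.tau k s) Γ.Δ := by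
  simpa only [tau_delta] using h.tau k

theorem Simple.tau {s : G} (hs : Γ.Simple s) (k : ℤ) : Γ.Simple (Γ.tau k s) :=
  ⟨tau_mem k hs.1, tau_leftDvd_delta hs.2 k⟩

theorem delta_leftDvd_mul_delta {u : G} (hu : u ∈ Γ.pos) : Γ.LeftDvd Γ.Δ (u * Γ.Δ) := by
  simpa [LeftDvd, tau, mul_assoc] using tau_mem 1 hu

theorem leftDvd_delta_zpow_iff {v : G} {M : ℤ} :
    Γ.LeftDvd v (Γ.Δ ^ M) ↔ Γ.LeftDvd (Γ.Δ ^ (-M)) v⁻¹ := by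
  have key : ∀ y : G, Γ.tau (-M) (y⁻¹ * Γ.Δ ^ M) = (Γ.Δ ^ (-M))⁻¹ * y⁻¹ := by
    intro y; simp only [tau]; group
  unfold LeftDvd
  rw [← key v]
  exact ⟨tau_mem (-M), fun h => by simpa [tau_tau_neg] using tau_mem M h⟩

/-- A common divisor of maximal `posLength` is a gcd: its lcm with any other common divisor
is again a common divisor, so it cannot be strictly larger. -/
theorem exists_isLeftGcd {a b : G} (ha : a ∈ Γ.pos) (hb : b ∈ Γ.pos) : ∃ d, Γ.IsLeftGcd d a b := by
  let lengths := Γ.posLength '' {c | c ∈ Γ.pos ∧ Γ.LeftDvd c a ∧ Γ.LeftDvd c b}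
  have hne : lengths.Nonempty :=
    ⟨_, 1, ⟨one_mem _, by simpa [LeftDvd] using ha, by simpa [LeftDvd] using hb⟩, rfl⟩
  have hbdd : BddAbove lengths := by
    refine ⟨Γ.posLength a, ?_⟩
    rintro _ ⟨c, ⟨hc, hca, -⟩, rfl⟩
    exact hca.posLength_le hc
  obtain ⟨d, ⟨hd, hda, hdb⟩, hlen⟩ := Nat.sSup_mem hne hbdd
  refine ⟨d, hd, hda, hdb, fun c hc hca hcb => ?_⟩
  obtain ⟨m, hm, hdm, hcm, hmin⟩ := Γ.lcm_right d hd c hc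
  have hm_le : Γ.posLength m ≤ Γ.posLength d :=
    hlen ▸ le_csSup hbdd ⟨m, ⟨hm, hmin a ha hda hca, hmin b hb hdb hcb⟩, rfl⟩
  have hdm1 : d⁻¹ * m = 1 := by
    by_contra h
    have := posLength_lt_mul_right hd hdm h
    rw [mul_inv_cancel_left] at this
    omega
  rwa [inv_mul_eq_one.1 hdm1]

/-- `u(a ∧ b) = ua ∧ ub`: if `m` is the lcm of `u` and `e`, then `u⁻¹m` is a common divisor
of `a` and `b`. -/
theorem IsLeftGcd.leftDvd_mul {d a b u e : G} (hd : Γ.IsLeftGcd d a b) (hu : u ∈ Γ.pos)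
    (he : e ∈ Γ.pos) (hea : Γ.LeftDvd e (u * a)) (heb : Γ.LeftDvd e (u * b)) :
    Γ.LeftDvd e (u * d) := by
  obtain ⟨hdp, hda, hdb, hmax⟩ := hd
  obtain ⟨m, hm, hum, hem, hmin⟩ := Γ.lcm_right u hu e he
  have hma : Γ.LeftDvd m (u * a) :=
    hmin _ (mul_mem hu (hda.mem_pos hdp)) (leftDvd_mul_right u (hda.mem_pos hdp)) hea
  have hmb : Γ.LeftDvd m (u * b) :=
    hmin _ (mul_mem hu (hdb.mem_pos hdp)) (leftDvd_mul_right u (hdb.mem_pos hdp)) heb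
  have hud : Γ.LeftDvd (u⁻¹ * m) d :=
    hmax _ hum (by simpa using hma.mul_left u⁻¹) (by simpa using hmb.mul_left u⁻¹)
  exact LeftDvd.trans hem (by simpa using hud.mul_left u)

/-- Convexity of `inf`: with `u = Δ⁻ᵐv`, the claim is `τᵐ(s) ≼ u(x ∧ Δ) = ux ∧ uΔ`. -/
theorem zpow_delta_leftDvd_conj_of_isLeftGcd {s x v : G} {m : ℤ} (hs : Γ.IsLeftGcd s x Γ.Δ)
    (hv : Γ.LeftDvd (Γ.Δ ^ m) v) (hxv : Γ.LeftDvd (Γ.Δ ^ m) (x⁻¹ * v * x)) :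
    Γ.LeftDvd (Γ.Δ ^ m) (s⁻¹ * v * s) := by
  set u := (Γ.Δ ^ m)⁻¹ * v
  have hx : Γ.LeftDvd (Γ.tau m x) (u * x) := by
    have : (Γ.tau m x)⁻¹ * (u * x) = (Γ.Δ ^ m)⁻¹ * (x⁻¹ * v * x) := by simp only [u, tau]; group
    rwa [LeftDvd, this]
  have hs' : Γ.LeftDvd (Γ.tau m s) (u * s) :=
    hs.leftDvd_mul hv (tau_mem m hs.1) ((hs.2.1.tau m).trans hx)
      ((tau_leftDvd_delta hs.2.2.1 m).trans (delta_leftDvd_mul_delta hv))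
  have : (Γ.tau m s)⁻¹ * (u * s) = (Γ.Δ ^ m)⁻¹ * (s⁻¹ * v * s) := by simp only [u, tau]; group
  rwa [LeftDvd, ← this]

/-- Convexity of `sup`: inversion exchanges the two bounds (`leftDvd_delta_zpow_iff`). -/
theorem conj_leftDvd_zpow_delta_of_isLeftGcd {s x v : G} {M : ℤ} (hs : Γ.IsLeftGcd s x Γ.Δ)
    (hv : Γ.LeftDvd v (Γ.Δ ^ M)) (hxv : Γ.LeftDvd (x⁻¹ * v * x) (Γ.Δ ^ M)) :
    Γ.LeftDvd (s⁻¹ * v * s) (Γ.Δ ^ M) := by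
  rw [leftDvd_delta_zpow_iff] at hv hxv ⊢
  simpa [mul_assoc] using
    zpow_delta_leftDvd_conj_of_isLeftGcd hs hv (by simpa [mul_assoc] using hxv)

theorem InInterval.conj_of_isLeftGcd {r : ℕ} {p q : Fin r → ℤ} {v : Fin r → G} {s x : G}
    (hs : Γ.IsLeftGcd s x Γ.Δ) (hv : Γ.InInterval p q v)
    (hxv : Γ.InInterval p q (fun i => x⁻¹ * v i * x)) :
    Γ.InInterval p q (fun i => s⁻¹ * v i * s) := fun i =>
  ⟨zpow_delta_leftDvd_conj_of_isLeftGcd hs (hv i).1 (hxv i).1,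
    conj_leftDvd_zpow_delta_of_isLeftGcd hs (hv i).2 (hxv i).2⟩

/-- `τ` permutes the finite set of simples, so one of its nonzero powers fixes them all. -/
theorem exists_tau_eq_self_of_simple : ∃ k ≠ 0, ∀ s, Γ.Simple s → Γ.tau k s = s := by
  have : Finite {s | Γ.Simple s} := Γ.simples_finite.to_subtype
  let f : ℤ → {s | Γ.Simple s} → {s | Γ.Simple s} := fun k s => ⟨Γ.tau k s, s.2.tau k⟩
  obtain ⟨i, j, hij, hf⟩ := Finite.exists_ne_map_eq_of_infinite f
  refine ⟨-i + j, by omega, fun s hs => ?_⟩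
  have hs' : Γ.tau i s = Γ.tau j s := congrArg Subtype.val (congrFun hf ⟨s, hs⟩)
  rw [tau_add, ← hs', tau_neg_tau]

theorem tau_eq_self_of_simple {k : ℤ} (h : ∀ s, Γ.Simple s → Γ.tau k s = s) (g : G) :
    Γ.tau k g = g := by
  have hpos : ∀ u ∈ Γ.pos, Γ.tau k u = u := fun u hu =>
    Γ.pos_induction (by simp [tau]) h (fun x _ y _ hx hy => by rw [tau_mul, hx, hy]) hu
  obtain ⟨α, hα, β, hβ, rfl⟩ := Γ.fractions g
  rw [tau_mul, tau_inv, hpos α hα, hpos β hβ]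

theorem exists_delta_pow_commute : ∃ N : ℕ, 0 < N ∧ ∀ g, Commute (Γ.Δ ^ N) g := by
  obtain ⟨k, hk, hfix⟩ := Γ.exists_tau_eq_self_of_simple
  have hcomm (g : G) : Commute (Γ.Δ ^ k) g := tau_eq_self_iff.1 (tau_eq_self_of_simple hfix g)
  refine ⟨k.natAbs, Int.natAbs_pos.2 hk, fun g => ?_⟩
  rcases Int.natAbs_eq k with h | h
  · rw [← zpow_natCast, ← h]
    exact hcomm g
  · rw [← Commute.inv_left_iff, ← zpow_natCast, ← zpow_neg, ← h]
    exact hcomm g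

theorem simple_leftDvd_delta_pow {s : G} (hs : Γ.Simple s) {N : ℕ} (hN : 0 < N) :
    Γ.LeftDvd s (Γ.Δ ^ N) := by
  obtain ⟨N, rfl⟩ := Nat.exists_eq_add_one_of_ne_zero hN.ne'
  rw [pow_succ']
  exact hs.2.trans (leftDvd_mul_right _ (pow_mem Γ.delta_mem N))

theorem exists_leftDvd_pow_of_commute {D : G} (hD : ∀ g, Commute D g)
    (hsD : ∀ s, Γ.Simple s → Γ.LeftDvd s D) {a : G} (ha : a ∈ Γ.pos) :
    ∃ m : ℕ, Γ.LeftDvd a (D ^ m) := by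
  refine Γ.pos_induction ⟨0, by simp [LeftDvd]⟩ (fun s hs => ⟨1, by simpa using hsD s hs⟩) ?_ ha
  rintro x - y - ⟨j, hj⟩ ⟨k, hk⟩
  refine ⟨j + k, ?_⟩
  have : (x * y)⁻¹ * D ^ (j + k) = (y⁻¹ * D ^ k) * (x⁻¹ * D ^ j) := by
    rw [pow_add, mul_assoc y⁻¹, ((hD _).pow_left k).eq]; group
  rw [LeftDvd, this]
  exact mul_mem hk hj

/-- Multiply `x = α⁻¹β` by a central power of `Δ` that `α` divides. -/
theorem exists_mem_pos_conj_eq (x : G) : ∃ z ∈ Γ.pos, ∀ g, z⁻¹ * g * z = x⁻¹ * g * x := by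
  obtain ⟨N, hN, hcomm⟩ := Γ.exists_delta_pow_commute
  obtain ⟨α, hα, β, hβ, rfl⟩ := Γ.fractions x
  obtain ⟨m, hm⟩ := exists_leftDvd_pow_of_commute hcomm
    (fun s hs => simple_leftDvd_delta_pow hs hN) hα
  set D := (Γ.Δ ^ N) ^ m
  have hD (g : G) : Commute D g := (hcomm g).pow_left m
  refine ⟨α⁻¹ * β * D, ?_, fun g => ?_⟩
  · rw [mul_assoc, ← (hD β).eq, ← mul_assoc]
    exact mul_mem hm hβ
  · set w := (α⁻¹ * β)⁻¹ * g * (α⁻¹ * β)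
    have : (α⁻¹ * β * D)⁻¹ * g * (α⁻¹ * β * D) = D⁻¹ * w * D := by simp only [w]; group
    rw [this, mul_assoc, ← (hD w).eq, inv_mul_cancel_left]

theorem exists_simple_ne_one_leftDvd {x : G} (hx : x ∈ Γ.pos) (hx1 : x ≠ 1) :
    ∃ t, Γ.Simple t ∧ t ≠ 1 ∧ Γ.LeftDvd t x := by
  refine Γ.pos_induction (P := fun u => u ≠ 1 → ∃ t, Γ.Simple t ∧ t ≠ 1 ∧ Γ.LeftDvd t u)
    (fun h => (h rfl).elim) (fun s hs hs1 => ⟨s, hs, hs1, by simp [LeftDvd]⟩) ?_ hx hx1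
  intro u _ w hw hu hw' huw1
  by_cases hu1 : u = 1
  · subst hu1
    simpa using hw' (by simpa using huw1)
  · obtain ⟨t, ht, ht1, htu⟩ := hu hu1
    exact ⟨t, ht, ht1, htu.trans (leftDvd_mul_right u hw)⟩

theorem IsLeftGcd.ne_one {d x : G} (hd : Γ.IsLeftGcd d x Γ.Δ) (hx1 : x ≠ 1) : d ≠ 1 := by
  obtain ⟨t, ht, ht1, htx⟩ := exists_simple_ne_one_leftDvd (hd.2.1.mem_pos hd.1) hx1
  have htd := hd.2.2.2 t ht.1 htx ht.2
  rintro rfl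
  exact ht1 (eq_one_of_mem_pos_of_inv_mem_pos ht.1 (by simpa [LeftDvd] using htd))

theorem conj_mem_of_mem_pos {r : ℕ} {p q : Fin r → ℤ} {W : Set (Fin r → G)}
    (hW : W ⊆ {v | Γ.InInterval p q v})
    (hclosed : ∀ v ∈ W, ∀ s : G, Γ.Simple s →
      Γ.InInterval p q (fun i => s⁻¹ * v i * s) → (fun i => s⁻¹ * v i * s) ∈ W)
    {x : G} (hx : x ∈ Γ.pos) {v : Fin r → G} (hv : v ∈ W)
    (hxv : Γ.InInterval p q (fun i => x⁻¹ * v i * x)) : (fun i => x⁻¹ * v i * x) ∈ W := by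
  induction hn : Γ.posLength x using Nat.strong_induction_on generalizing x v with
  | _ n ih =>
  by_cases hx1 : x = 1
  · subst hx1
    simpa using hv
  obtain ⟨d, hd⟩ := exists_isLeftGcd hx Γ.delta_mem
  have hdv : (fun i => d⁻¹ * v i * d) ∈ W :=
    hclosed v hv d ⟨hd.1, hd.2.2.1⟩ ((hW hv).conj_of_isLeftGcd hd hxv)
  have hlt : Γ.posLength (d⁻¹ * x) < n := by
    simpa [← hn] using posLength_lt_mul_left hd.1 hd.2.1 (hd.ne_one hx1)
  have hconj (i : Fin r) : (d⁻¹ * x)⁻¹ * (d⁻¹ * v i * d) * (d⁻¹ * x) = x⁻¹ * v i * x := by group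
  simpa only [hconj] using ih _ hlt hd.2.1 hdv (by simpa only [hconj] using hxv) rfl

end GarsideStructure

/-- Correctness of the basic algorithm solving the SCP in Garside groups:
for `a, c ∈ [p,q]`, the tuples `a` and `c` are conjugate if and only if `c` belongs
to the smallest subset `W` of `[p,q]` containing `a` that is closed under
conjugation by simple elements that stays in `[p,q]`. -/
theorem scp_algorithm_correct {G : Type*} [Group G] (Γ : GarsideStructure G)
    (r : ℕ) (p q : Fin r → ℤ) (a c : Fin r → G)
    (ha : Γ.InInterval p q a) (hc : Γ.InInterval p q c) :
    (∃ x : G, ∀ i, x⁻¹ * a i * x = c i) ↔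
      ∀ W : Set (Fin r → G),
        W ⊆ {v | Γ.InInterval p q v} →
        a ∈ W →
        (∀ v ∈ W, ∀ s : G, Γ.Simple s →
          Γ.InInterval p q (fun i => s⁻¹ * v i * s) →
          (fun i => s⁻¹ * v i * s) ∈ W) →
        c ∈ W := by
  constructor
  · rintro ⟨x, hx⟩ W hW haW hclosed
    obtain ⟨z, hz, hzx⟩ := Γ.exists_mem_pos_conj_eq x
    have hzc : (fun i => z⁻¹ * a i * z) = c := funext fun i => (hzx _).trans (hx i)
    exact hzc ▸ GarsideStructure.conj_mem_of_mem_pos hW hclosed hz haW (hzc ▸ hc)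
  · intro h
    let conjugates := {v | Γ.InInterval p q v ∧ ∃ y : G, ∀ i, y⁻¹ * a i * y = v i}
    refine (h conjugates (fun v hv => hv.1) ⟨ha, 1, by simp⟩ ?_).2
    rintro v ⟨-, y, hy⟩ s - hs
    exact ⟨hs, y * s, fun i => by simp only [← hy i]; group⟩
end

section
/- Let G be a Garside group, r a natural number, p, q ∈ ℤ^r, and v ∈ [p,q] ⊆ G^r. For each i = 1, …, r, write v_i = Δ^{p_i} w_i = z_i Δ^{p_i} with w_i, z_i ∈ G⁺, and assume w_i⁻¹ Δ^{q_i − p_i} ∈ G⁺ and Δ^{q_i − p_i} z_i⁻¹ ∈ G⁺. Let s ∈ S. Then v^s ∈ [p,q] if and only if for all i = 1, …, r: τ^{p_i}(s) ≼ w_i s and τ^{−q_i}(s) ≼ (Δ^{q_i − p_i} z_i⁻¹) s. -/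
namespace GarsideStructure

variable {G : Type*} [Group G]

variable (Γ : GarsideStructure G)

lemma map_mem_pos_of_simple (f : G →* G) (hf : ∀ a, Γ.Simple a → f a ∈ Γ.pos) {x : G}
    (hx : x ∈ Γ.pos) : f x ∈ Γ.pos := by
  have hle : Submonoid.closure {s : G | s ∈ Γ.pos ∧ s⁻¹ * Γ.Δ ∈ Γ.pos} ≤ Γ.pos.comap f :=
    Submonoid.closure_le.mpr hf
  rw [Γ.simples_generate] at hle
  exact hle hx

lemma delta_mul_mul_inv_delta_mem {x : G} (hx : x ∈ Γ.pos) : Γ.Δ * x * Γ.Δ⁻¹ ∈ Γ.pos := by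
  refine Γ.map_mem_pos_of_simple (MulAut.conj Γ.Δ).toMonoidHom (fun a ⟨ha, haΔ⟩ => ?_) hx
  -- `Δa⁻¹` is a right, hence left, divisor of `Δ`, and its left complement is `ΔaΔ⁻¹`.
  have hc : Γ.Δ * a⁻¹ ∈ Γ.pos := (Γ.balanced a ha).mp haΔ
  have hcΔ : (Γ.Δ * a⁻¹)⁻¹ * Γ.Δ ∈ Γ.pos := by simpa [mul_assoc] using ha
  simpa [mul_assoc] using (Γ.balanced _ hc).mp hcΔ

lemma inv_delta_mul_mul_delta_mem {x : G} (hx : x ∈ Γ.pos) : Γ.Δ⁻¹ * x * Γ.Δ ∈ Γ.pos := by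
  suffices h : (MulAut.conj Γ.Δ⁻¹).toMonoidHom x ∈ Γ.pos by simpa using h
  refine Γ.map_mem_pos_of_simple _ (fun a ⟨ha, haΔ⟩ => ?_) hx
  -- `a⁻¹Δ` is a left, hence right, divisor of `Δ`, and its right complement is `Δ⁻¹aΔ`.
  have hΔc : Γ.Δ * (a⁻¹ * Γ.Δ)⁻¹ ∈ Γ.pos := by simpa using ha
  simpa [mul_assoc] using (Γ.balanced _ haΔ).mpr hΔc

lemma delta_mem_normalizer_pos : Γ.Δ ∈ Subgroup.normalizer (Γ.pos : Set G) := fun x =>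
  ⟨Γ.delta_mul_mul_inv_delta_mem, fun h => by
    simpa [mul_assoc] using Γ.inv_delta_mul_mul_delta_mem h⟩

lemma tau_mem_pos_iff (k : ℤ) (x : G) : Γ.tau k x ∈ Γ.pos ↔ x ∈ Γ.pos := by
  have hk := zpow_mem Γ.delta_mem_normalizer_pos (-k)
  rw [Subgroup.mem_set_normalizer_iff] at hk
  simp only [SetLike.mem_coe, zpow_neg, inv_inv] at hk
  rw [tau, zpow_neg, ← hk]

lemma zpow_delta_leftDvd_conj_iff (k : ℤ) {v w : G} (hv : v = Γ.Δ ^ k * w) (s : G) :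
    Γ.LeftDvd (Γ.Δ ^ k) (s⁻¹ * v * s) ↔ Γ.LeftDvd (Γ.tau k s) (w * s) := by
  unfold LeftDvd tau
  rw [hv]
  group

lemma conj_leftDvd_zpow_delta_iff (k l : ℤ) {v z : G} (hv : v = z * Γ.Δ ^ l) (s : G) :
    Γ.LeftDvd (s⁻¹ * v * s) (Γ.Δ ^ k) ↔
      Γ.LeftDvd (Γ.tau (-k) s) (Γ.Δ ^ (k - l) * z⁻¹ * s) := by
  unfold LeftDvd
  rw [← Γ.tau_mem_pos_iff (-k), tau, tau, hv]
  group

end GarsideStructure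

theorem conj_simple_mem_interval_iff_general {G : Type*} [Group G] (Γ : GarsideStructure G)
    (r : ℕ) (p q : Fin r → ℤ) (v : Fin r → G)
    (w z : Fin r → G)
    (hw : ∀ i, w i ∈ Γ.pos ∧ v i = Γ.Δ ^ (p i) * w i)
    (hz : ∀ i, z i ∈ Γ.pos ∧ v i = z i * Γ.Δ ^ (p i))
    (s : G) :
    Γ.InInterval p q (fun i => s⁻¹ * v i * s) ↔
      ∀ i, Γ.LeftDvd (Γ.tau (p i) s) (w i * s) ∧
        Γ.LeftDvd (Γ.tau (-(q i)) s) (Γ.Δ ^ (q i - p i) * (z i)⁻¹ * s) :=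
  forall_congr' fun i => and_congr (Γ.zpow_delta_leftDvd_conj_iff (p i) (hw i).2 s)
    (Γ.conj_leftDvd_zpow_delta_iff (q i) (p i) (hz i).2 s)

/-- Characterization of when `vˢ ∈ [p,q]` for a simple element `s`:
writing `vᵢ = Δ^{pᵢ} wᵢ = zᵢ Δ^{pᵢ}` with `wᵢ, zᵢ ∈ G⁺`, `wᵢ⁻¹ Δ^{qᵢ−pᵢ} ∈ G⁺` and
`Δ^{qᵢ−pᵢ} zᵢ⁻¹ ∈ G⁺`, we have `vˢ ∈ [p,q]` iff for all `i`:
`τ^{pᵢ}(s) ≼ wᵢ s` and `τ^{−qᵢ}(s) ≼ (Δ^{qᵢ−pᵢ} zᵢ⁻¹) s`. -/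
theorem conj_simple_mem_interval_iff {G : Type*} [Group G] (Γ : GarsideStructure G)
    (r : ℕ) (p q : Fin r → ℤ) (v : Fin r → G) (hv : Γ.InInterval p q v)
    (w z : Fin r → G)
    (hw : ∀ i, w i ∈ Γ.pos ∧ v i = Γ.Δ ^ (p i) * w i)
    (hz : ∀ i, z i ∈ Γ.pos ∧ v i = z i * Γ.Δ ^ (p i))
    (hw' : ∀ i, (w i)⁻¹ * Γ.Δ ^ (q i - p i) ∈ Γ.pos)
    (hz' : ∀ i, Γ.Δ ^ (q i - p i) * (z i)⁻¹ ∈ Γ.pos)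
    (s : G) (hs : Γ.Simple s) :
    Γ.InInterval p q (fun i => s⁻¹ * v i * s) ↔
      ∀ i, Γ.LeftDvd (Γ.tau (p i) s) (w i * s) ∧
        Γ.LeftDvd (Γ.tau (-(q i)) s) (Γ.Δ ^ (q i - p i) * (z i)⁻¹ * s) :=
  conj_simple_mem_interval_iff_general Γ r p q v w z hw hz s
end
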